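/- Let c > 0, Λ0 ∈ SO(3), and M a real 3×3 matrix. Define L(ε) = c Λ0 + ε M for ε ∈ ℝ. Suppose S : ℝ → ℝ^{3×3} is differentiable at 0 and satisfies, for all ε in a neighborhood of 0, that S(ε) is symmetric positive semidefinite and S(ε)·S(ε) = L(ε)ᵀ L(ε). Then the map V : ε ↦ (S(ε))⁻¹ is differentiable at ε = 0 with V(0) = c⁻¹ I and derivative V′(0) = −(1/(2c²)) (Mᵀ Λ0 + Λ0ᵀ M). -/

import Mathlib

/-!
Since `Λ0ᵀ Λ0 = 1`, we have `S 0 * S 0 = c² • 1`, so uniqueness of positive semidefinite square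
roots forces `S 0 = c • 1`. Differentiating `S ε * S ε = L(ε)ᵀ L(ε)` at `0` gives
`S'(0) S(0) + S(0) S'(0) = c • (Mᵀ Λ0 + Λ0ᵀ M)`, hence `S'(0) = ½ (Mᵀ Λ0 + Λ0ᵀ M)`, and the
derivative of the inverse, `-S(0)⁻¹ S'(0) S(0)⁻¹`, is the claimed matrix.
-/

open Matrix

/-- `SO3 A` means `A` is a real 3×3 special orthogonal matrix. -/
def SO3 (A : Matrix (Fin 3) (Fin 3) ℝ) : Prop :=
  Aᵀ * A = 1 ∧ A.det = 1

attribute [local instance] Matrix.normedAddCommGroup Matrix.normedSpace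

open Filter Topology

theorem hasDerivAt_const_add_smul {𝕜 E : Type*} [NontriviallyNormedField 𝕜]
    [NormedAddCommGroup E] [NormedSpace 𝕜 E] (C D : E) (x : 𝕜) :
    HasDerivAt (fun y => C + y • D) D x := by
  simpa only [id, one_smul] using ((hasDerivAt_id x).smul_const D).const_add C

open scoped ComplexOrder MatrixOrder in
theorem Matrix.PosSemidef.eq_of_mul_self_eq {𝕜 n : Type*} [RCLike 𝕜] [Fintype n] [DecidableEq n]
    {A B : Matrix n n 𝕜} (hA : A.PosSemidef) (hB : B.PosSemidef) (h : A * A = B * B) : A = B :=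
  (CFC.mul_self_eq_mul_self_iff A B hA.nonneg hB.nonneg).1 h

section MatrixCalculus

variable {𝕜 : Type*} [NontriviallyNormedField 𝕜] {l m n : Type*} [Fintype l] [Fintype m]
  [Fintype n] {x : 𝕜}

theorem HasDerivAt.matrix_mul [CompleteSpace 𝕜] {f : 𝕜 → Matrix l m 𝕜} {g : 𝕜 → Matrix m n 𝕜}
    {f' : Matrix l m 𝕜} {g' : Matrix m n 𝕜} (hf : HasDerivAt f f' x) (hg : HasDerivAt g g' x) :
    HasDerivAt (fun y => f y * g y) (f' * g x + f x * g') x := by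
  have h := (mulLinearMap 𝕜).toContinuousBilinearMap.hasDerivAt_of_bilinear
    (fun _ => hf) fun _ => hg
  simp only [LinearMap.toContinuousBilinearMap_apply, mulLinearMap_apply_apply] at h
  rw [add_comm] at h
  exact h

theorem hasDerivAt_transpose_mul_const_add_smul [CompleteSpace 𝕜] (A B : Matrix m n 𝕜) (x : 𝕜) :
    HasDerivAt (fun y => (A + y • B)ᵀ * (A + y • B)) (Bᵀ * (A + x • B) + (A + x • B)ᵀ * B) x := by
  have h := (hasDerivAt_const_add_smul Aᵀ Bᵀ x).matrix_mul (hasDerivAt_const_add_smul A B x)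
  simp only [transpose_add, transpose_smul]
  exact h

theorem HasDerivAt.matrix_inv [DecidableEq n] {f : 𝕜 → Matrix n n 𝕜} {f' : Matrix n n 𝕜}
    (hf : HasDerivAt f f' x) (hx : (f x).det ≠ 0) :
    HasDerivAt (fun y => (f y)⁻¹) (-((f x)⁻¹ * f' * (f x)⁻¹)) x := by
  have hcont : ContinuousAt (fun y => (f y)⁻¹) x := by
    refine (continuousAt_matrix_inv _ ?_).comp hf.continuousAt
    simpa [Ring.inverse_eq_inv'] using continuousAt_inv₀ hx
  have hdet : ∀ᶠ y in 𝓝 x, (f y).det ≠ 0 :=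
    (continuous_id.matrix_det.continuousAt.comp hf.continuousAt).eventually_ne hx
  replace hf := hf.tendsto_slope
  refine hasDerivAt_iff_tendsto_slope.2 <|
    (((hcont.tendsto.mono_left nhdsWithin_le_nhds).mul hf).mul tendsto_const_nhds).neg.congr' ?_
  filter_upwards [nhdsWithin_le_nhds hdet] with y hy
  -- `(f y)⁻¹ - (f x)⁻¹ = -((f y)⁻¹ * (f y - f x) * (f x)⁻¹)`
  rw [slope_def_module, slope_def_module, Matrix.mul_smul, Matrix.smul_mul, ← smul_neg]
  congr 1
  rw [mul_sub, sub_mul, Matrix.nonsing_inv_mul _ (isUnit_iff_ne_zero.2 hy), Matrix.mul_assoc,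
    Matrix.mul_nonsing_inv _ (isUnit_iff_ne_zero.2 hx)]
  simp

end MatrixCalculus

/-- with `L ε = c Λ0 + ε M` and `S ε` the symmetric positive semidefinite
square root of `L(ε)ᵀ L(ε)` near `ε = 0`, `S` differentiable at `0`, the map
`V : ε ↦ (S ε)⁻¹` is differentiable at `0`, with `V 0 = c⁻¹ I` and
`V′(0) = −(1/(2c²))(Mᵀ Λ0 + Λ0ᵀ M)`. -/
theorem statement4 (c : ℝ) (hc : 0 < c) (Λ0 M : Matrix (Fin 3) (Fin 3) ℝ)
    (hΛ0 : SO3 Λ0) (S : ℝ → Matrix (Fin 3) (Fin 3) ℝ)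
    (hSdiff : DifferentiableAt ℝ S 0)
    (hS : ∀ᶠ ε in nhds (0 : ℝ), (S ε).PosSemidef ∧
      S ε * S ε = (c • Λ0 + ε • M)ᵀ * (c • Λ0 + ε • M)) :
    DifferentiableAt ℝ (fun ε : ℝ => (S ε)⁻¹) 0 ∧
    (S 0)⁻¹ = c⁻¹ • (1 : Matrix (Fin 3) (Fin 3) ℝ) ∧
    deriv (fun ε : ℝ => (S ε)⁻¹) 0
      = (-(1 / (2 * c ^ 2))) • (Mᵀ * Λ0 + Λ0ᵀ * M) := by
  obtain ⟨hpsd0, hsq0⟩ := hS.self_of_nhds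
  have hS0 : S 0 = c • 1 := hpsd0.eq_of_mul_self_eq (PosSemidef.one.smul hc.le) <| by
    simp [hsq0, hΛ0.1, smul_smul]
  set X := Mᵀ * Λ0 + Λ0ᵀ * M
  have hgram : HasDerivAt (fun ε : ℝ => (c • Λ0 + ε • M)ᵀ * (c • Λ0 + ε • M)) (c • X) 0 := by
    simpa [X, smul_add, add_comm] using hasDerivAt_transpose_mul_const_add_smul (c • Λ0) M 0
  have hS' : HasDerivAt S ((2⁻¹ : ℝ) • X) 0 := by
    have hD := hSdiff.hasDerivAt
    have hsum : deriv S 0 * S 0 + S 0 * deriv S 0 = c • X :=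
      ((hD.matrix_mul hD).congr_of_eventuallyEq (hS.mono fun ε h => h.2.symm)).unique hgram
    rw [hS0, Matrix.mul_smul, Matrix.smul_mul, Matrix.mul_one, Matrix.one_mul, ← smul_add] at hsum
    have hdouble : deriv S 0 + deriv S 0 = X := smul_right_injective _ hc.ne' hsum
    rw [show (2⁻¹ : ℝ) • X = deriv S 0 by rw [← hdouble]; module]
    exact hD
  have hV0 : (S 0)⁻¹ = c⁻¹ • 1 := by
    rw [hS0]
    exact Matrix.inv_eq_left_inv (by simp [smul_smul, hc.ne'])
  have hV := hS'.matrix_inv (by simp [hS0, hc.ne'])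
  refine ⟨hV.differentiableAt, hV0, hV.deriv.trans ?_⟩
  rw [hV0]
  simp only [Matrix.smul_mul, Matrix.mul_smul, Matrix.one_mul, Matrix.mul_one, smul_smul,
    ← neg_smul]
  congr 1
  field_simp
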